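/- For the map A ↦ Γ(A) = (Id ⊗ A)(|Ψ_0⟩⟨Ψ_0|) and a state σ_n = Σ_{y,z} α_{y,z}|Ψ_y⟩⟨Ψ_z|, one has Γ(Λ_{σ_n}) = σ_n if and only if the matrix (α_{y,z}) is diagonal, i.e., α_{y,z} = 0 for all y ≠ z. -/

import Mathlib

open Matrix Kronecker BigOperators Finset ComplexOrder

noncomputable def Xmat (d : ℕ) : Matrix (ZMod d) (ZMod d) ℂ :=
  Matrix.of fun r c => if r = c - 1 then 1 else 0

noncomputable def Zmat (d : ℕ) (ω : ℂ) : Matrix (ZMod d) (ZMod d) ℂ :=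
  Matrix.of fun r c => if r = c then ω ^ c.val else 0

/-- The Weyl operator `N_(i,j) = X^i Z^j`. -/
noncomputable def weyl (d : ℕ) [NeZero d] (ω : ℂ) (u : ZMod d × ZMod d) : Matrix (ZMod d) (ZMod d) ℂ :=
  Xmat d ^ u.1.val * Zmat d ω ^ u.2.val

/-- Tensor-product Weyl operator on `H^{⊗n}`. -/
noncomputable def weylT (d n : ℕ) [NeZero d] (ω : ℂ) (x : Fin n → ZMod d × ZMod d) :
    Matrix (Fin n → ZMod d) (Fin n → ZMod d) ℂ :=
  Matrix.of fun m l => ∏ i, weyl d ω (x i) (m i) (l i)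

/-- Symplectic form on `(ℤ/d)^{2n}`. -/
def symp {d n : ℕ} (y y' : Fin n → ZMod d × ZMod d) : ZMod d :=
  ∑ i, ((y i).1 * (y' i).2 - (y i).2 * (y' i).1)

/-- Generalized Bell vector `|Ψ_y⟩ = d^{-n/2} ∑_l |l⟩ ⊗ N_y |l⟩`. -/
noncomputable def bell (d n : ℕ) [NeZero d] (ω : ℂ) (y : Fin n → ZMod d × ZMod d) :
    (Fin n → ZMod d) × (Fin n → ZMod d) → ℂ :=
  fun p => (Real.sqrt (d ^ n) : ℂ)⁻¹ * weylT d n ω y p.2 p.1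

/-- `|Ψ'_x⟩ = d^{-n/2} ∑_l N_x |l⟩ ⊗ |l⟩`. -/
noncomputable def bell' (d n : ℕ) [NeZero d] (ω : ℂ) (x : Fin n → ZMod d × ZMod d) :
    (Fin n → ZMod d) × (Fin n → ZMod d) → ℂ :=
  fun p => (Real.sqrt (d ^ n) : ℂ)⁻¹ * weylT d n ω x p.1 p.2

/-- `⟨Ψ_x| σ |Ψ_x⟩`. -/
noncomputable def braket (d n : ℕ) [NeZero d] (ω : ℂ)
    (σ : Matrix ((Fin n → ZMod d) × (Fin n → ZMod d)) ((Fin n → ZMod d) × (Fin n → ZMod d)) ℂ)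
    (x : Fin n → ZMod d × ZMod d) : ℂ :=
  dotProduct (star (bell d n ω x)) (σ.mulVec (bell d n ω x))

/-- The teleportation channel `Λ_σ(ρ) = ∑_x ⟨Ψ_x|σ|Ψ_x⟩ N_x ρ N_x†`. -/
noncomputable def telechan (d n : ℕ) [NeZero d] (ω : ℂ)
    (σ : Matrix ((Fin n → ZMod d) × (Fin n → ZMod d)) ((Fin n → ZMod d) × (Fin n → ZMod d)) ℂ)
    (ρ : Matrix (Fin n → ZMod d) (Fin n → ZMod d) ℂ) :
    Matrix (Fin n → ZMod d) (Fin n → ZMod d) ℂ :=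
  ∑ x : Fin n → ZMod d × ZMod d, braket d n ω σ x • (weylT d n ω x * ρ * (weylT d n ω x)ᴴ)

/-- Kraus operator `T_x = |Ψ'_x⟩⟨Ψ'_x| ⊗ N_x` on `(T⊗A)⊗B`. -/
noncomputable def kraus (d n : ℕ) [NeZero d] (ω : ℂ) (x : Fin n → ZMod d × ZMod d) :
    Matrix (((Fin n → ZMod d) × (Fin n → ZMod d)) × (Fin n → ZMod d))
           (((Fin n → ZMod d) × (Fin n → ZMod d)) × (Fin n → ZMod d)) ℂ :=
  Matrix.of fun p q => bell' d n ω x p.1 * star (bell' d n ω x q.1) * weylT d n ω x p.2 q.2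

/-- `ρ ⊗ σ` on `(T⊗A)⊗B` (ρ on T, σ on A⊗B). -/
noncomputable def tensorTAB (d n : ℕ)
    (ρ : Matrix (Fin n → ZMod d) (Fin n → ZMod d) ℂ)
    (σ : Matrix ((Fin n → ZMod d) × (Fin n → ZMod d)) ((Fin n → ZMod d) × (Fin n → ZMod d)) ℂ) :
    Matrix (((Fin n → ZMod d) × (Fin n → ZMod d)) × (Fin n → ZMod d))
           (((Fin n → ZMod d) × (Fin n → ZMod d)) × (Fin n → ZMod d)) ℂ :=
  Matrix.of fun p q => ρ p.1.1 q.1.1 * σ (p.1.2, p.2) (q.1.2, q.2)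

/-- Partial trace over the first two subsystems (T and A). -/
noncomputable def ptraceTA (d n : ℕ) [NeZero d]
    (M : Matrix (((Fin n → ZMod d) × (Fin n → ZMod d)) × (Fin n → ZMod d))
               (((Fin n → ZMod d) × (Fin n → ZMod d)) × (Fin n → ZMod d)) ℂ) :
    Matrix (Fin n → ZMod d) (Fin n → ZMod d) ℂ :=
  Matrix.of fun b b' => ∑ t : Fin n → ZMod d, ∑ a : Fin n → ZMod d, M ((t, a), b) ((t, a), b')

/-!
Conjugating `|Ψ_0⟩⟨Ψ_0|` by `1 ⊗ N_x` gives `|Ψ_x⟩⟨Ψ_x|`, so `Γ(Λ_σ) = ∑_x ⟨Ψ_x|σ|Ψ_x⟩ |Ψ_x⟩⟨Ψ_x|`.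
The Bell vectors are orthonormal, because the Weyl operators are orthogonal for the
Hilbert–Schmidt inner product (a character sum over `ZMod d`, where primitivity of `ω` enters).
Hence `⟨Ψ_x|σ|Ψ_x⟩ = α_{x,x}`, and as the dyads `|Ψ_y⟩⟨Ψ_z|` are linearly independent,
`Γ(Λ_σ) = σ` exactly when `α` vanishes off the diagonal.
-/

lemma Xmat_pow_apply (d : ℕ) [NeZero d] (k : ℕ) (r c : ZMod d) :
    (Xmat d ^ k) r c = if r + k = c then 1 else 0 := by
  induction k generalizing c with
  | zero => simp [one_apply]
  | succ k ih =>
    rw [pow_succ, mul_apply, Finset.sum_eq_single (c - 1)]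
    · rw [ih]
      simp [Xmat, eq_sub_iff_add_eq, add_assoc]
    · intro b _ hb
      simp [Xmat, hb]
    · simp

lemma Zmat_eq_diagonal (d : ℕ) (ω : ℂ) : Zmat d ω = diagonal fun c => ω ^ c.val := by
  ext r c
  by_cases h : r = c <;> simp [Zmat, h]

lemma weyl_apply (d : ℕ) [NeZero d] (ω : ℂ) (u : ZMod d × ZMod d) (r c : ZMod d) :
    weyl d ω u r c = if r + u.1 = c then (ω ^ c.val) ^ u.2.val else 0 := by
  rw [weyl, Zmat_eq_diagonal, diagonal_pow, mul_diagonal, Xmat_pow_apply, ZMod.natCast_zmod_val]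
  split_ifs <;> simp

lemma weyl_zero (d : ℕ) [NeZero d] (ω : ℂ) : weyl d ω 0 = 1 := by
  simp [weyl]

lemma weylT_zero (d n : ℕ) [NeZero d] (ω : ℂ) : weylT d n ω 0 = 1 := by
  ext m l
  simp only [weylT, of_apply, Pi.zero_apply, weyl_zero, one_apply, Finset.prod_boole,
    Finset.mem_univ, true_implies, funext_iff]

lemma sum_star_pow_mul_pow {d : ℕ} [NeZero d] {ω : ℂ} (hω : IsPrimitiveRoot ω d)
    (a b : ZMod d) :
    ∑ c : ZMod d, star ((ω ^ c.val) ^ a.val) * (ω ^ c.val) ^ b.val =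
      if a = b then (d : ℂ) else 0 := by
  set ψ := AddChar.zmodChar d hω.pow_eq_one
  have hψ : ∀ c k : ZMod d, (ω ^ c.val) ^ k.val = ψ (c * k) := fun c k => by
    rw [← AddChar.zmodChar_apply hω.pow_eq_one, ← AddChar.map_nsmul_eq_pow, nsmul_eq_mul,
      ZMod.natCast_zmod_val, mul_comm]
  have hstar : ∀ x, star (ψ x) = ψ (-x) := fun x =>
    AddChar.starComp_apply (by rw [ZMod.ringChar_zmod_n]; exact NeZero.pos d) x
  simp_rw [hψ, hstar, ← AddChar.map_add_eq_mul, ← mul_neg, ← mul_add, neg_add_eq_sub]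
  rw [AddChar.sum_mulShift _ (AddChar.zmodChar_primitive_of_primitive_root d hω)]
  simp [sub_eq_zero, eq_comm]

lemma sum_sum_prod_apply {ι α R : Type*} [Fintype ι] [DecidableEq ι] [Fintype α] [CommSemiring R]
    (f : ι → α → α → R) :
    ∑ m : ι → α, ∑ l : ι → α, ∏ i, f i (m i) (l i) = ∏ i, ∑ a, ∑ b, f i a b := by
  rw [Fintype.prod_sum fun i a => ∑ b, f i a b]
  exact Fintype.sum_congr _ _ fun m => (Fintype.prod_sum fun i b => f i (m i) b).symm

lemma trace_conjTranspose_weyl_mul_weyl {d : ℕ} [NeZero d] {ω : ℂ} (hω : IsPrimitiveRoot ω d)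
    (u v : ZMod d × ZMod d) :
    ((weyl d ω u)ᴴ * weyl d ω v).trace = if u = v then (d : ℂ) else 0 := by
  have hcol : ∀ c, ∑ r, star (weyl d ω u r c) * weyl d ω v r c =
      if u.1 = v.1 then star ((ω ^ c.val) ^ u.2.val) * (ω ^ c.val) ^ v.2.val else 0 := by
    intro c
    have hshift : c - u.1 + v.1 = c ↔ u.1 = v.1 := by
      rw [sub_add_comm, add_eq_right, sub_eq_zero, eq_comm]
    rw [Finset.sum_eq_single (c - u.1)]
    · simp [weyl_apply, hshift]
    · intro r _ hr
      simp [weyl_apply, ← eq_sub_iff_add_eq, hr]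
    · simp
  simp only [trace, Matrix.diag, mul_apply, conjTranspose_apply, hcol]
  rw [Finset.sum_ite_irrel, sum_star_pow_mul_pow hω]
  simp [Prod.ext_iff, ite_and]

lemma trace_conjTranspose_weylT_mul_weylT {d n : ℕ} [NeZero d] {ω : ℂ}
    (hω : IsPrimitiveRoot ω d) (x y : Fin n → ZMod d × ZMod d) :
    ((weylT d n ω x)ᴴ * weylT d n ω y).trace = if x = y then (d : ℂ) ^ n else 0 := by
  have hfactor : ((weylT d n ω x)ᴴ * weylT d n ω y).trace =
      ∏ i, ((weyl d ω (x i))ᴴ * weyl d ω (y i)).trace := by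
    simp only [trace, Matrix.diag, mul_apply, conjTranspose_apply, weylT, of_apply, star_prod,
      ← Finset.prod_mul_distrib]
    exact sum_sum_prod_apply fun i a b => star (weyl d ω (x i) b a) * weyl d ω (y i) b a
  simp [hfactor, trace_conjTranspose_weyl_mul_weyl hω, Finset.prod_ite_zero, funext_iff]

lemma bell_eq_smul_vec (d n : ℕ) [NeZero d] (ω : ℂ) (y : Fin n → ZMod d × ZMod d) :
    bell d n ω y = (Real.sqrt (d ^ n) : ℂ)⁻¹ • vec (weylT d n ω y) :=
  rfl

lemma star_bell_dotProduct_bell {d n : ℕ} [NeZero d] {ω : ℂ} (hω : IsPrimitiveRoot ω d)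
    (y z : Fin n → ZMod d × ZMod d) :
    star (bell d n ω y) ⬝ᵥ bell d n ω z = if y = z then 1 else 0 := by
  have hnorm : (Real.sqrt (d ^ n) : ℂ)⁻¹ * (Real.sqrt (d ^ n) : ℂ)⁻¹ * (d : ℂ) ^ n = 1 := by
    rw [← mul_inv, ← Complex.ofReal_mul, Real.mul_self_sqrt (by positivity)]
    push_cast
    exact inv_mul_cancel₀ (pow_ne_zero _ (Nat.cast_ne_zero.mpr (NeZero.ne d)))
  rw [bell_eq_smul_vec, bell_eq_smul_vec, star_smul, smul_dotProduct, dotProduct_smul,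
    star_vec_dotProduct_vec, trace_conjTranspose_weylT_mul_weylT hω]
  split_ifs <;> simp [← mul_assoc, hnorm]

lemma one_kronecker_weylT_mulVec_bell_zero (d n : ℕ) [NeZero d] (ω : ℂ)
    (x : Fin n → ZMod d × ZMod d) :
    (1 ⊗ₖ weylT d n ω x) *ᵥ bell d n ω 0 = bell d n ω x := by
  rw [bell_eq_smul_vec, bell_eq_smul_vec, mulVec_smul, ← vec_mul_eq_mulVec, weylT_zero, mul_one]

lemma mul_vecMulVec_star_mul_conjTranspose {R P Q : Type*} [CommSemiring R] [StarRing R]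
    [Fintype P] [Fintype Q] (K : Matrix Q P R) (u v : P → R) :
    K * vecMulVec u (star v) * Kᴴ = vecMulVec (K *ᵥ u) (star (K *ᵥ v)) := by
  rw [mul_vecMulVec, vecMulVec_mul, star_mulVec]

section Orthonormal

variable {ι P R : Type*} [Fintype ι] [Fintype P] [CommSemiring R] [StarRing R] [DecidableEq ι]
  {e : ι → P → R}

lemma star_dotProduct_sum_smul_vecMulVec_mulVec
    (he : ∀ i j, star (e i) ⬝ᵥ e j = if i = j then 1 else 0) (α : ι → ι → R) (y z : ι) :
    star (e y) ⬝ᵥ (∑ a, ∑ b, α a b • vecMulVec (e a) (star (e b))) *ᵥ e z = α y z := by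
  simp [sum_mulVec, smul_mulVec, vecMulVec_mulVec, dotProduct_sum, he]

lemma sum_smul_vecMulVec_inj (he : ∀ i j, star (e i) ⬝ᵥ e j = if i = j then 1 else 0)
    {α β : ι → ι → R} :
    ∑ a, ∑ b, α a b • vecMulVec (e a) (star (e b)) =
        ∑ a, ∑ b, β a b • vecMulVec (e a) (star (e b)) ↔ α = β := by
  refine ⟨fun h => funext₂ fun y z => ?_, fun h => h ▸ rfl⟩
  rw [← star_dotProduct_sum_smul_vecMulVec_mulVec he α, h,
    star_dotProduct_sum_smul_vecMulVec_mulVec he β]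

end Orthonormal

theorem stmt11_general (d n : ℕ) [NeZero d] (ω : ℂ) (hω : IsPrimitiveRoot ω d)
    (σ : Matrix ((Fin n → ZMod d) × (Fin n → ZMod d)) ((Fin n → ZMod d) × (Fin n → ZMod d)) ℂ)
    (α : (Fin n → ZMod d × ZMod d) → (Fin n → ZMod d × ZMod d) → ℂ)
    (hσ : σ = ∑ y : Fin n → ZMod d × ZMod d, ∑ z : Fin n → ZMod d × ZMod d,
      α y z • Matrix.vecMulVec (bell d n ω y) (star (bell d n ω z))) :
    ((∑ x : Fin n → ZMod d × ZMod d, braket d n ω σ x •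
        (((1 : Matrix (Fin n → ZMod d) (Fin n → ZMod d) ℂ) ⊗ₖ weylT d n ω x) *
          Matrix.vecMulVec (bell d n ω 0) (star (bell d n ω 0)) *
          ((1 : Matrix (Fin n → ZMod d) (Fin n → ZMod d) ℂ) ⊗ₖ weylT d n ω x)ᴴ)) = σ)
      ↔ ∀ y z : Fin n → ZMod d × ZMod d, y ≠ z → α y z = 0 := by
  have hbell := star_bell_dotProduct_bell (n := n) hω
  have hterm : ∀ x, braket d n ω σ x •
      ((1 ⊗ₖ weylT d n ω x) * vecMulVec (bell d n ω 0) (star (bell d n ω 0)) *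
        (1 ⊗ₖ weylT d n ω x)ᴴ) = α x x • vecMulVec (bell d n ω x) (star (bell d n ω x)) := by
    intro x
    rw [mul_vecMulVec_star_mul_conjTranspose, one_kronecker_weylT_mulVec_bell_zero, braket, hσ,
      star_dotProduct_sum_smul_vecMulVec_mulVec hbell]
  have hdiag : ∑ x, α x x • vecMulVec (bell d n ω x) (star (bell d n ω x)) =
      ∑ y, ∑ z, (if y = z then α y z else 0) • vecMulVec (bell d n ω y) (star (bell d n ω z)) := by
    simp [ite_smul]
  rw [Finset.sum_congr rfl fun x _ => hterm x, hdiag, hσ, sum_smul_vecMulVec_inj hbell]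
  refine ⟨fun h y z hyz => by simpa [hyz] using (congrFun₂ h y z).symm,
    fun h => funext₂ fun y z => ?_⟩
  by_cases hyz : y = z
  · simp [hyz]
  · simp [hyz, h y z hyz]

/-- `Γ(Λ_{σ_n}) = σ_n` iff the Bell-basis matrix `(α_{y,z})` is diagonal,
where `Γ(A) = (Id ⊗ A)(|Ψ_0⟩⟨Ψ_0|)`. -/
theorem stmt11 (d n : ℕ) [NeZero d] (hd : 2 ≤ d) (ω : ℂ) (hω : IsPrimitiveRoot ω d)
    (σ : Matrix ((Fin n → ZMod d) × (Fin n → ZMod d)) ((Fin n → ZMod d) × (Fin n → ZMod d)) ℂ)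
    (hpsd : σ.PosSemidef) (htr : σ.trace = 1)
    (α : (Fin n → ZMod d × ZMod d) → (Fin n → ZMod d × ZMod d) → ℂ)
    (hσ : σ = ∑ y : Fin n → ZMod d × ZMod d, ∑ z : Fin n → ZMod d × ZMod d,
      α y z • Matrix.vecMulVec (bell d n ω y) (star (bell d n ω z))) :
    ((∑ x : Fin n → ZMod d × ZMod d, braket d n ω σ x •
        (((1 : Matrix (Fin n → ZMod d) (Fin n → ZMod d) ℂ) ⊗ₖ weylT d n ω x) *
          Matrix.vecMulVec (bell d n ω 0) (star (bell d n ω 0)) *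
          ((1 : Matrix (Fin n → ZMod d) (Fin n → ZMod d) ℂ) ⊗ₖ weylT d n ω x)ᴴ)) = σ)
      ↔ ∀ y z : Fin n → ZMod d × ZMod d, y ≠ z → α y z = 0 :=
  stmt11_general d n ω hω σ α hσ
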